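/- The Nienhuis weights satisfy the pentagonal relation: for all θ, u1(θ)·v(π/3−θ) + v(θ)·u1(π/3−θ)·x = u1(π/3+θ)·x·(1 + n·u2(θ)·u2(π/3−θ)·x), where n = −2cos(4πs/3) and x = 1/(2cos(πs/3)). -/

import Mathlib

/- Nienhuis' integrable rhombus weights for the loop O(n) model. -/

noncomputable def nienhuisT (s θ : ℝ) : ℝ :=
  (Real.sin (2 * Real.pi * s / 3)) ^ 3 / Real.sin (Real.pi * s / 3) +
    Real.sin ((θ - Real.pi / 3) * s) * Real.sin ((2 * Real.pi / 3 - θ) * s)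

noncomputable def nienhuisU1 (s θ : ℝ) : ℝ :=
  Real.sin ((Real.pi - θ) * s) * Real.sin (2 * Real.pi * s / 3) / nienhuisT s θ

noncomputable def nienhuisU2 (s θ : ℝ) : ℝ :=
  Real.sin (θ * s) * Real.sin (2 * Real.pi * s / 3) / nienhuisT s θ

noncomputable def nienhuisV (s θ : ℝ) : ℝ :=
  Real.sin (θ * s) * Real.sin ((Real.pi - θ) * s) / nienhuisT s θ

set_option maxHeartbeats 2000000 in
/-- The pentagonal relation for the Nienhuis weights, with
`n = −2cos(4πs/3)` and `x = 1/(2cos(πs/3))`: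
`u1(θ)·v(π/3−θ) + v(θ)·u1(π/3−θ)·x = u1(π/3+θ)·x·(1 + n·u2(θ)·u2(π/3−θ)·x)`. -/
theorem nienhuis_pentagonal_relation (s θ : ℝ)
    (hc : Real.cos (Real.pi * s / 3) ≠ 0)
    (ht : nienhuisT s θ ≠ 0)
    (ht' : nienhuisT s (Real.pi / 3 - θ) ≠ 0)
    (ht'' : nienhuisT s (Real.pi / 3 + θ) ≠ 0) :
    nienhuisU1 s θ * nienhuisV s (Real.pi / 3 - θ) +
      nienhuisV s θ * nienhuisU1 s (Real.pi / 3 - θ) * (1 / (2 * Real.cos (Real.pi * s / 3))) =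
    nienhuisU1 s (Real.pi / 3 + θ) * (1 / (2 * Real.cos (Real.pi * s / 3))) *
      (1 + (-2 * Real.cos (4 * Real.pi * s / 3)) * nienhuisU2 s θ *
        nienhuisU2 s (Real.pi / 3 - θ) * (1 / (2 * Real.cos (Real.pi * s / 3)))) := by
  by_cases hsa : Real.sin (Real.pi * s / 3) = 0
  · have h2A : Real.sin (2 * Real.pi * s / 3) = 0 := by
      rw [show 2 * Real.pi * s / 3 = 2 * (Real.pi * s / 3) by ring, Real.sin_two_mul, hsa]
      ring
    simp [nienhuisU1, nienhuisU2, nienhuisV, h2A]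
  · unfold nienhuisT at ht ht' ht''
    unfold nienhuisU1 nienhuisU2 nienhuisV nienhuisT
    have e2A : Real.sin (2 * Real.pi * s / 3)
        = 2 * Real.sin (Real.pi * s / 3) * Real.cos (Real.pi * s / 3) := by
      rw [show 2 * Real.pi * s / 3 = 2 * (Real.pi * s / 3) by ring, Real.sin_two_mul]
    have e4A : Real.cos (4 * Real.pi * s / 3)
        = 2 * (2 * Real.cos (Real.pi * s / 3) ^ 2 - 1) ^ 2 - 1 := by
      rw [show 4 * Real.pi * s / 3 = 2 * (2 * (Real.pi * s / 3)) by ring, Real.cos_two_mul,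
        Real.cos_two_mul]
    have ea1 : Real.sin ((Real.pi - θ) * s)
        = (3 * Real.sin (Real.pi * s / 3) - 4 * Real.sin (Real.pi * s / 3) ^ 3) * Real.cos (θ * s)
          - (4 * Real.cos (Real.pi * s / 3) ^ 3 - 3 * Real.cos (Real.pi * s / 3)) * Real.sin (θ * s) := by
      rw [show (Real.pi - θ) * s = 3 * (Real.pi * s / 3) - θ * s by ring, Real.sin_sub,
        Real.sin_three_mul, Real.cos_three_mul]
    have ea3 : Real.sin ((θ - Real.pi / 3) * s)
        = Real.sin (θ * s) * Real.cos (Real.pi * s / 3)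
          - Real.cos (θ * s) * Real.sin (Real.pi * s / 3) := by
      rw [show (θ - Real.pi / 3) * s = θ * s - Real.pi * s / 3 by ring, Real.sin_sub]
    have ea4 : Real.sin ((2 * Real.pi / 3 - θ) * s)
        = 2 * Real.sin (Real.pi * s / 3) * Real.cos (Real.pi * s / 3) * Real.cos (θ * s)
          - (2 * Real.cos (Real.pi * s / 3) ^ 2 - 1) * Real.sin (θ * s) := by
      rw [show (2 * Real.pi / 3 - θ) * s = 2 * (Real.pi * s / 3) - θ * s by ring, Real.sin_sub,
        Real.sin_two_mul, Real.cos_two_mul]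
    have eb1 : Real.sin ((Real.pi - (Real.pi / 3 - θ)) * s)
        = 2 * Real.sin (Real.pi * s / 3) * Real.cos (Real.pi * s / 3) * Real.cos (θ * s)
          + (2 * Real.cos (Real.pi * s / 3) ^ 2 - 1) * Real.sin (θ * s) := by
      rw [show (Real.pi - (Real.pi / 3 - θ)) * s = 2 * (Real.pi * s / 3) + θ * s by ring,
        Real.sin_add, Real.sin_two_mul, Real.cos_two_mul]
    have eb3 : Real.sin ((Real.pi / 3 - θ - Real.pi / 3) * s) = -Real.sin (θ * s) := by
      rw [show (Real.pi / 3 - θ - Real.pi / 3) * s = -(θ * s) by ring, Real.sin_neg]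
    have eb4 : Real.sin ((2 * Real.pi / 3 - (Real.pi / 3 - θ)) * s)
        = Real.sin (Real.pi * s / 3) * Real.cos (θ * s)
          + Real.cos (Real.pi * s / 3) * Real.sin (θ * s) := by
      rw [show (2 * Real.pi / 3 - (Real.pi / 3 - θ)) * s = Real.pi * s / 3 + θ * s by ring,
        Real.sin_add]
    have eb5 : Real.sin ((Real.pi / 3 - θ) * s)
        = Real.sin (Real.pi * s / 3) * Real.cos (θ * s)
          - Real.cos (Real.pi * s / 3) * Real.sin (θ * s) := by
      rw [show (Real.pi / 3 - θ) * s = Real.pi * s / 3 - θ * s by ring, Real.sin_sub]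
    have ec1 : Real.sin ((Real.pi - (Real.pi / 3 + θ)) * s)
        = 2 * Real.sin (Real.pi * s / 3) * Real.cos (Real.pi * s / 3) * Real.cos (θ * s)
          - (2 * Real.cos (Real.pi * s / 3) ^ 2 - 1) * Real.sin (θ * s) := by
      rw [show (Real.pi - (Real.pi / 3 + θ)) * s = 2 * (Real.pi * s / 3) - θ * s by ring,
        Real.sin_sub, Real.sin_two_mul, Real.cos_two_mul]
    have ec3 : Real.sin ((Real.pi / 3 + θ - Real.pi / 3) * s) = Real.sin (θ * s) := by
      rw [show (Real.pi / 3 + θ - Real.pi / 3) * s = θ * s by ring]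
    have ec4 : Real.sin ((2 * Real.pi / 3 - (Real.pi / 3 + θ)) * s)
        = Real.sin (Real.pi * s / 3) * Real.cos (θ * s)
          - Real.cos (Real.pi * s / 3) * Real.sin (θ * s) := by
      rw [show (2 * Real.pi / 3 - (Real.pi / 3 + θ)) * s = Real.pi * s / 3 - θ * s by ring,
        Real.sin_sub]
    simp only [e2A, e4A, ea1, ea3, ea4, eb1, eb3, eb4, eb5, ec1, ec3, ec4] at ht ht' ht'' ⊢
    set sa := Real.sin (Real.pi * s / 3) with hsadef
    set ca := Real.cos (Real.pi * s / 3) with hcadef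
    set sb := Real.sin (θ * s) with hsbdef
    set cb := Real.cos (θ * s) with hcbdef
    have h1 : sa ^ 2 + ca ^ 2 = 1 := Real.sin_sq_add_cos_sq _
    have h2 : sb ^ 2 + cb ^ 2 = 1 := Real.sin_sq_add_cos_sq _
    have dsa : (2 * sa * ca) ^ 3 / sa = 8 * sa ^ 2 * ca ^ 3 := by
      rw [show (2 * sa * ca) ^ 3 = 8 * sa ^ 2 * ca ^ 3 * sa by ring,
        mul_div_cancel_right₀ _ hsa]
    simp only [dsa] at ht ht' ht'' ⊢
    simp only [div_mul_eq_mul_div, ← mul_div_assoc, div_div]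
    have hX : (8 * sa ^ 2 * ca ^ 3 + (sb * ca - cb * sa) * (2 * sa * ca * cb - (2 * ca ^ 2 - 1) * sb)) ≠ 0 := ht
    have hY : (8 * sa ^ 2 * ca ^ 3 + -sb * (sa * cb + ca * sb)) ≠ 0 := ht'
    have hZ : (8 * sa ^ 2 * ca ^ 3 + sb * (sa * cb - ca * sb)) ≠ 0 := ht''
    have h2ca : (2 * ca : ℝ) ≠ 0 := by
      simpa using hc
    have hXY2 : (8 * sa ^ 2 * ca ^ 3 + (sb * ca - cb * sa) * (2 * sa * ca * cb - (2 * ca ^ 2 - 1) * sb)) * (8 * sa ^ 2 * ca ^ 3 + -sb * (sa * cb + ca * sb)) * (2 * ca) ≠ 0 := mul_ne_zero (mul_ne_zero hX hY) h2ca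
    have key : ((((3 * sa - 4 * sa ^ 3) * cb - (4 * ca ^ 3 - 3 * ca) * sb) * (2 * sa * ca) * ((sa * cb - ca * sb) * (2 * sa * ca * cb + (2 * ca ^ 2 - 1) * sb))) * (2 * ca) + (sb * ((3 * sa - 4 * sa ^ 3) * cb - (4 * ca ^ 3 - 3 * ca) * sb) * ((2 * sa * ca * cb + (2 * ca ^ 2 - 1) * sb) * (2 * sa * ca)) * 1)) * ((8 * sa ^ 2 * ca ^ 3 + sb * (sa * cb - ca * sb)) * (2 * ca))
        = ((2 * sa * ca * cb - (2 * ca ^ 2 - 1) * sb) * (2 * sa * ca) * 1) * (1 * ((8 * sa ^ 2 * ca ^ 3 + (sb * ca - cb * sa) * (2 * sa * ca * cb - (2 * ca ^ 2 - 1) * sb)) * (8 * sa ^ 2 * ca ^ 3 + -sb * (sa * cb + ca * sb)) * (2 * ca)) + (-2 * (2 * (2 * ca ^ 2 - 1) ^ 2 - 1) * (sb * (2 * sa * ca)) * ((sa * cb - ca * sb) * (2 * sa * ca)) * 1)) := by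
      linear_combination (16 * ca ^ 3 * sb ^ 2 * cb + (-16) * ca ^ 3 * sb ^ 2 * cb ^ 3 + (-16) * ca ^ 3 * sb ^ 4 * cb + (-112) * ca ^ 5 * sb ^ 2 * cb + 112 * ca ^ 5 * sb ^ 2 * cb ^ 3 + 112 * ca ^ 5 * sb ^ 4 * cb + 224 * ca ^ 7 * sb ^ 2 * cb + (-224) * ca ^ 7 * sb ^ 2 * cb ^ 3 + (-224) * ca ^ 7 * sb ^ 4 * cb + (-512) * ca ^ 9 * cb + 512 * ca ^ 9 * cb ^ 3 + 384 * ca ^ 9 * sb ^ 2 * cb + 128 * ca ^ 9 * sb ^ 2 * cb ^ 3 + 128 * ca ^ 9 * sb ^ 4 * cb + 1024 * ca ^ 11 * cb + (-1024) * ca ^ 11 * cb ^ 3 + (-1024) * ca ^ 11 * sb ^ 2 * cb + (-512) * ca ^ 13 * cb + 512 * ca ^ 13 * cb ^ 3 + 512 * ca ^ 13 * sb ^ 2 * cb + 32 * sa * ca ^ 4 * sb * cb ^ 2 + (-32) * sa * ca ^ 4 * sb * cb ^ 4 + (-16) * sa * ca ^ 4 * sb ^ 3 + (-16) * sa * ca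 ^ 4 * sb ^ 3 * cb ^ 2 + (-96) * sa * ca ^ 6 * sb * cb ^ 2 + 96 * sa * ca ^ 6 * sb * cb ^ 4 + 64 * sa * ca ^ 6 * sb ^ 3 + 32 * sa * ca ^ 6 * sb ^ 3 * cb ^ 2 + (-256) * sa * ca ^ 8 * sb + 320 * sa * ca ^ 8 * sb * cb ^ 2 + (-64) * sa * ca ^ 8 * sb * cb ^ 4 + 192 * sa * ca ^ 8 * sb ^ 3 + 768 * sa * ca ^ 10 * sb + (-768) * sa * ca ^ 10 * sb * cb ^ 2 + (-768) * sa * ca ^ 10 * sb ^ 3 + (-512) * sa * ca ^ 12 * sb + 512 * sa * ca ^ 12 * sb * cb ^ 2 + 512 * sa * ca ^ 12 * sb ^ 3 + 16 * sa ^ 2 * ca ^ 3 * sb ^ 2 * cb + (-16) * sa ^ 2 * ca ^ 3 * sb ^ 2 * cb ^ 3 + (-16) * sa ^ 2 * ca ^ 3 * sb ^ 4 * cb + (-96) * sa ^ 2 * ca ^ 5 * sb ^ 2 * cb + 96 * sa ^ 2 * ca ^ 5 * sb ^ 2 * cb ^ 3 + 64 * sa ^ 2 * ca ^ 5 * sb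 ^ 4 * cb + 128 * sa ^ 2 * ca ^ 7 * sb ^ 2 * cb + (-128) * sa ^ 2 * ca ^ 7 * sb ^ 2 * cb ^ 3 + (-64) * sa ^ 2 * ca ^ 7 * sb ^ 4 * cb + (-512) * sa ^ 2 * ca ^ 9 * cb + 512 * sa ^ 2 * ca ^ 9 * cb ^ 3 + 512 * sa ^ 2 * ca ^ 9 * sb ^ 2 * cb + 512 * sa ^ 2 * ca ^ 11 * cb + (-512) * sa ^ 2 * ca ^ 11 * cb ^ 3 + (-512) * sa ^ 2 * ca ^ 11 * sb ^ 2 * cb + 16 * sa ^ 3 * ca ^ 2 * sb ^ 3 * cb ^ 2 + 32 * sa ^ 3 * ca ^ 4 * sb * cb ^ 2 + (-32) * sa ^ 3 * ca ^ 4 * sb * cb ^ 4 + (-64) * sa ^ 3 * ca ^ 4 * sb ^ 3 * cb ^ 2 + (-64) * sa ^ 3 * ca ^ 6 * sb * cb ^ 2 + 64 * sa ^ 3 * ca ^ 6 * sb * cb ^ 4 + 64 * sa ^ 3 * ca ^ 6 * sb ^ 3 * cb ^ 2 + (-256) * sa ^ 3 * ca ^ 8 * sb + 256 * sa ^ 3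 * ca ^ 8 * sb * cb ^ 2 + 512 * sa ^ 3 * ca ^ 10 * sb + (-512) * sa ^ 3 * ca ^ 10 * sb * cb ^ 2 + 128 * sa ^ 4 * ca ^ 5 * sb ^ 2 * cb + 64 * sa ^ 4 * ca ^ 5 * sb ^ 2 * cb ^ 3 + (-512) * sa ^ 4 * ca ^ 7 * sb ^ 2 * cb + (-512) * sa ^ 4 * ca ^ 9 * cb + 512 * sa ^ 4 * ca ^ 9 * cb ^ 3 + 512 * sa ^ 4 * ca ^ 9 * sb ^ 2 * cb + (-64) * sa ^ 5 * ca ^ 4 * sb * cb ^ 4 + (-512) * sa ^ 6 * ca ^ 7 * cb ^ 3) * h1 + ((-16) * ca ^ 3 * sb ^ 2 * cb + 128 * ca ^ 5 * sb ^ 2 * cb + (-336) * ca ^ 7 * sb ^ 2 * cb + 512 * ca ^ 9 * cb + 352 * ca ^ 9 * sb ^ 2 * cb + (-1536) * ca ^ 11 * cb + (-128) * ca ^ 11 * sb ^ 2 * cb + 1536 * ca ^ 13 * cb + (-512) * ca ^ 15 * cb + (-32) * sa * ca ^ 4 * sb * cb ^ 2 + 16 * sa * ca ^ 4 * sb ^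 3 + 128 * sa * ca ^ 6 * sb * cb ^ 2 + (-80) * sa * ca ^ 6 * sb ^ 3 + 256 * sa * ca ^ 8 * sb + (-160) * sa * ca ^ 8 * sb * cb ^ 2 + 128 * sa * ca ^ 8 * sb ^ 3 + (-1024) * sa * ca ^ 10 * sb + 64 * sa * ca ^ 10 * sb * cb ^ 2 + (-64) * sa * ca ^ 10 * sb ^ 3 + 1280 * sa * ca ^ 12 * sb + (-512) * sa * ca ^ 14 * sb) * h2
    rw [show (((3 * sa - 4 * sa ^ 3) * cb - (4 * ca ^ 3 - 3 * ca) * sb) * (2 * sa * ca) * ((sa * cb - ca * sb) * (2 * sa * ca * cb + (2 * ca ^ 2 - 1) * sb))) / ((8 * sa ^ 2 * ca ^ 3 + (sb * ca - cb * sa) * (2 * sa * ca * cb - (2 * ca ^ 2 - 1) * sb)) * (8 * sa ^ 2 * ca ^ 3 + -sb * (sa * cb + ca * sb)))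
        = (((3 * sa - 4 * sa ^ 3) * cb - (4 * ca ^ 3 - 3 * ca) * sb) * (2 * sa * ca) * ((sa * cb - ca * sb) * (2 * sa * ca * cb + (2 * ca ^ 2 - 1) * sb))) * (2 * ca) / ((8 * sa ^ 2 * ca ^ 3 + (sb * ca - cb * sa) * (2 * sa * ca * cb - (2 * ca ^ 2 - 1) * sb)) * (8 * sa ^ 2 * ca ^ 3 + -sb * (sa * cb + ca * sb)) * (2 * ca)) from
      (mul_div_mul_right _ _ h2ca).symm]
    rw [← add_div, add_div' _ _ _ hXY2]
    simp only [← mul_div_assoc, div_div]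
    rw [div_eq_div_iff hXY2 (mul_ne_zero hXY2 (mul_ne_zero hZ h2ca))]
    linear_combination ((8 * sa ^ 2 * ca ^ 3 + (sb * ca - cb * sa) * (2 * sa * ca * cb - (2 * ca ^ 2 - 1) * sb)) * (8 * sa ^ 2 * ca ^ 3 + -sb * (sa * cb + ca * sb)) * (2 * ca)) * key
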